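/- Let 1 ≤ k ≤ n and f ∈ F_+^{k:n}(I). Then for each j ∈ {k, …, n}: the limit f^{(j)}(a+) := lim_{x ↓ a} f^{(j)}(x) exists in [0, ∞); f^{(i)}(a+) = 0 for every i ∈ {j, …, n} such that p_{a;j,i} is identically +∞ on I; and for every x ∈ I, f^{(j)}(x)·w_j(x) = Σ_{i=j}^n f^{(i)}(a+)·p_{a;j,i}(x) + ∫_I p^+_{t;j,n}(x) d f^{(n)}(t), where d f^{(n)} is the Lebesgue–Stieltjes measure on I of the nondecreasing right-continuous-on-I∖{b} function f^{(n)}, and the conventions 0·∞ = 0 and ∞·0 = 0 are used (so that every summand and the integral are finite and nonnegative). -/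

import Mathlib

open MeasureTheory Set Filter
open scoped ENNReal

noncomputable section

/-- `g` is right-continuous at every point of `I` that is not the greatest point of `I`,
and left-continuous at the greatest point of `I` when the latter exists (the class `LD`). -/
def IsLD (I : Set ℝ) (g : ℝ → ℝ) : Prop :=
  (∀ x ∈ I, (∃ y ∈ I, x < y) → Tendsto g (nhdsWithin x (I ∩ Ioi x)) (nhds (g x))) ∧
  (∀ x ∈ I, (∀ y ∈ I, y ≤ x) → Tendsto g (nhdsWithin x (I ∩ Iio x)) (nhds (g x)))

/-- `d 0, …, d n` is the system of generalized derivatives of `f` on `I` with respect to the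
gauge sequence `w`; i.e., `f ∈ L^n` with `f^{(j)} = d j` for `j = 0, …, n`. -/
structure IsGenL (I : Set ℝ) (w : ℕ → ℝ → ℝ) (n : ℕ) (f : ℝ → ℝ) (d : ℕ → ℝ → ℝ) : Prop where
  base : ∀ x ∈ I, f x = d 0 x * w 0 x
  ld : IsLD I (d n)
  integrable : ∀ j < n, ∀ z ∈ I, ∀ x ∈ I,
    IntervalIntegrable (fun u => d (j + 1) u * w (j + 1) u) volume z x
  deriv_eq : ∀ j < n, ∀ z ∈ I, ∀ x ∈ I,
    d j x = d j z + ∫ u in z..x, d (j + 1) u * w (j + 1) u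

/-- `f ∈ F_+^{k:n}(I)` (with derivative system `d`): all the generalized derivatives
`f^{(j)} = d j` of orders `j = k-1, …, n` are nondecreasing on `I`. -/
def MemF (I : Set ℝ) (w : ℕ → ℝ → ℝ) (k n : ℕ) (f : ℝ → ℝ) (d : ℕ → ℝ → ℝ) : Prop :=
  IsGenL I w n f d ∧ ∀ j, k - 1 ≤ j → j ≤ n → MonotoneOn (d j) I

/-- `w` is a sequence of positive, Borel-measurable, locally bounded gauge functions on `I`. -/
def IsGauge (I : Set ℝ) (w : ℕ → ℝ → ℝ) : Prop :=
  ∀ j, (∀ x ∈ I, 0 < w j x) ∧ Measurable (fun x : I => w j x) ∧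
    ∀ K ⊆ I, IsCompact K → ∃ C, ∀ x ∈ K, |w j x| ≤ C

def pAux (w : ℕ → ℝ → ℝ) (t : ℝ) (m : ℕ) : ℕ → ℝ → ℝ
  | 0 => w m
  | (i + 1) => fun x => w (m - (i + 1)) x * ∫ u in t..x, pAux w t m i u

/-- The `w`-polynomial `p_{t;j,m}` (for `t ∈ I`). -/
def pfun (w : ℕ → ℝ → ℝ) (t : ℝ) (j m : ℕ) : ℝ → ℝ := pAux w t m (m - j)

/-- The "positive part" `p^+_{t;j,m}`. -/
def pplus (w : ℕ → ℝ → ℝ) (t : ℝ) (j m : ℕ) : ℝ → ℝ := fun x =>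
  if t ≤ x then pfun w t j m x else 0

def pAuxE (w : ℕ → ℝ → ℝ) (I : Set ℝ) (m : ℕ) : ℕ → ℝ → ℝ≥0∞
  | 0 => fun x => ENNReal.ofReal (w m x)
  | (i + 1) => fun x =>
      ENNReal.ofReal (w (m - (i + 1)) x) * ∫⁻ u in I ∩ Iio x, pAuxE w I m i u

/-- `p_{a;j,m} : I → [0, ∞]`, where `a` is the left endpoint of `I` (the integrals from `a`
are taken over `(a, x) ∩ I = I ∩ Iio x`). -/
def pE (w : ℕ → ℝ → ℝ) (I : Set ℝ) (j m : ℕ) : ℝ → ℝ≥0∞ := pAuxE w I m (m - j)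

/-- The filter of `x ↓ a` within `I`, `a` being the left endpoint of `I`. -/
def leftEndFilter (I : Set ℝ) : Filter ℝ := ⨅ c ∈ I, Filter.principal (I ∩ Iic c)

/-- `ν(f) = ∫_I f dν ∈ [−∞, ∞]`. -/
def nuEval (ν : Measure ℝ) (I : Set ℝ) (f : ℝ → ℝ) : EReal :=
  ((∫⁻ x in I, ENNReal.ofReal (f x) ∂ν : ℝ≥0∞) : EReal)
    - ((∫⁻ x in I, ENNReal.ofReal (-f x) ∂ν : ℝ≥0∞) : EReal)

/-- The expectation `E g ∈ [−∞, ∞]` (in the extended sense). -/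
def eval' {α : Type*} [MeasurableSpace α] (P : Measure α) (g : α → ℝ) : EReal :=
  ((∫⁻ a, ENNReal.ofReal (g a) ∂P : ℝ≥0∞) : EReal)
    - ((∫⁻ a, ENNReal.ofReal (-g a) ∂P : ℝ≥0∞) : EReal)


/-!
For `k ≤ i ≤ n` the derivative `f^{(i)}` is nondecreasing and, since `f^{(i-1)}` is
nondecreasing, nonnegative; so `L i := inf f^{(i)} = f^{(i)}(a+)` exists in `[0, ∞)`. Both
`μ` and the measure with density `f^{(j+1)} w_{j+1}` are Stieltjes measures of nondecreasing
functions bounded below, and continuity from below gives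
`μ((a, x]) = f^{(n)}(x) - L n` and `∫_{(a,x)} f^{(j+1)} w_{j+1} = f^{(j)}(x) - L j`.
The first is the expansion for `j = n`, and it makes `μ` σ-finite on `I`. The expansion for
`j` follows from the one for `j + 1` by integrating over `(a, x)`, multiplying by `w_j(x)`
and exchanging the two integrals (Tonelli), which turns `p^+_{t;j+1,n}` into `p^+_{t;j,n}`
and `p_{a;j+1,i}` into `p_{a;j,i}`. Everything is computed in `[0, ∞]`, so the conventions
`0 · ∞ = 0` hold automatically, and finiteness of the left-hand side forces `L i = 0`
whenever `p_{a;j,i} ≡ ∞`.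
-/

open Topology

section StieltjesMeasure

variable {I : Set ℝ}

theorem leftEndFilter_eq_map_atBot (hI : I.Nonempty) :
    leftEndFilter I = map ((↑) : I → ℝ) atBot := by
  have : Nonempty I := hI.to_subtype
  ext s
  rw [leftEndFilter, mem_biInf_of_directed, mem_map, mem_atBot_sets]
  · simp only [mem_principal, Subtype.forall, Subtype.exists, Subtype.mk_le_mk, mem_preimage]
    exact ⟨fun ⟨c, hc, hcs⟩ => ⟨c, hc, fun y hy hyc => hcs ⟨hy, hyc⟩⟩,
      fun ⟨c, hc, hcs⟩ => ⟨c, hc, fun y hy => hcs y hy.1 hy.2⟩⟩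
  · intro a ha b hb
    refine ⟨min a b, by rcases min_choice a b with h | h <;> rw [h] <;> assumption, ?_, ?_⟩ <;>
      refine principal_mono.2 (inter_subset_inter_right _ (Iic_subset_Iic.2 ?_))
    exacts [min_le_left a b, min_le_right a b]
  · exact hI

theorem measure_inter_Iic_eq_ofReal_sub_iInf (hI : I.OrdConnected) {F : ℝ → ℝ}
    (hF : MonotoneOn F I) (hFb : BddBelow (F '' I)) {ν : Measure ℝ}
    (hν : ∀ x ∈ I, ∀ y ∈ I, x ≤ y → ν (Ioc x y) = ENNReal.ofReal (F y - F x))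
    (hν₀ : ∀ x ∈ I, (∀ y ∈ I, x ≤ y) → ν {x} = 0) {x : ℝ} (hx : x ∈ I) :
    ν (I ∩ Iic x) = ENNReal.ofReal (F x - ⨅ z : I, F z) := by
  have : Nonempty I := ⟨⟨x, hx⟩⟩
  have hIoc : ∀ z : I, ν (Ioc (z : ℝ) x) = ENNReal.ofReal (F x - F z) := by
    intro z
    rcases le_or_gt (z : ℝ) x with h | h
    · exact hν z z.2 x hx h
    · rw [Ioc_eq_empty (not_lt.2 h.le), measure_empty,
        ENNReal.ofReal_of_nonpos (sub_nonpos.2 (hF hx z.2 h.le))]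
  have hlim : Tendsto (fun z : I => ENNReal.ofReal (F x - F z)) atBot
      (𝓝 (ENNReal.ofReal (F x - ⨅ z : I, F z))) :=
    (ENNReal.continuous_ofReal.tendsto _).comp <| tendsto_const_nhds.sub <|
      tendsto_atBot_ciInf (f := fun z : I => F z) (fun a b hab => hF a.2 b.2 hab)
        (image_eq_range F I ▸ hFb)
  have hunion : Tendsto (fun z : I => ENNReal.ofReal (F x - F z)) atBot
      (𝓝 (ν (⋃ z : I, Ioc (z : ℝ) x))) := by
    simpa only [Function.comp_def, hIoc] using tendsto_measure_iUnion_atBot (μ := ν)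
      (fun a b (hab : a ≤ b) => Ioc_subset_Ioc_left hab : Antitone fun z : I => Ioc (z : ℝ) x)
  rw [← tendsto_nhds_unique hunion hlim]
  -- `⋃ z ∈ I, (z, x]` misses at most the least point of `I`, which is a `ν`-null set.
  have hleast : ν {y | y ∈ I ∧ ∀ z ∈ I, y ≤ z} = 0 := by
    by_cases h : ∃ m ∈ I, ∀ z ∈ I, m ≤ z
    · obtain ⟨m, hm, hmin⟩ := h
      refine measure_mono_null (fun y hy => ?_) (hν₀ m hm hmin)
      exact le_antisymm (hy.2 m hm) (hmin y hy.1)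
    · rw [show {y | y ∈ I ∧ ∀ z ∈ I, y ≤ z} = ∅ from
        eq_empty_of_forall_notMem fun y hy => h ⟨y, hy⟩, measure_empty]
  refine le_antisymm ?_ (measure_mono (iUnion_subset fun z y hy =>
    ⟨hI.out z.2 hx ⟨hy.1.le, hy.2⟩, hy.2⟩))
  calc ν (I ∩ Iic x) ≤ ν ({y | y ∈ I ∧ ∀ z ∈ I, y ≤ z} ∪ ⋃ z : I, Ioc (z : ℝ) x) := by
        refine measure_mono fun y ⟨hy, hyx⟩ => ?_
        by_cases h : ∀ z ∈ I, y ≤ z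
        · exact Or.inl ⟨hy, h⟩
        · push Not at h
          obtain ⟨z, hz, hzy⟩ := h
          exact Or.inr (mem_iUnion.2 ⟨⟨z, hz⟩, hzy, hyx⟩)
    _ ≤ ν (⋃ z : I, Ioc (z : ℝ) x) := by
        simpa [hleast] using measure_union_le (μ := ν) {y | y ∈ I ∧ ∀ z ∈ I, y ≤ z}
          (⋃ z : I, Ioc (z : ℝ) x)

theorem sigmaFinite_restrict_of_measure_inter_Iic_ne_top (hI : I.OrdConnected)
    (hne : I.Nonempty) {ν : Measure ℝ} (hν : ∀ x ∈ I, ν (I ∩ Iic x) ≠ ∞) :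
    SigmaFinite (ν.restrict I) := by
  have : Nonempty I := hne.to_subtype
  obtain ⟨xs, -, hxs⟩ := exists_seq_monotone_tendsto_atTop_atTop I
  refine ⟨⟨⟨fun m => Iic (xs m : ℝ) ∪ Iᶜ, fun _ => trivial, fun m => ?_, ?_⟩⟩⟩
  · rw [Measure.restrict_apply (measurableSet_Iic.union hI.measurableSet.compl),
      union_inter_distrib_right, compl_inter_self, union_empty, inter_comm]
    exact (hν _ (xs m).2).lt_top
  · refine iUnion_eq_univ_iff.2 fun y => ?_
    by_cases hy : y ∈ I
    · obtain ⟨m, hm⟩ := (hxs.eventually_ge_atTop ⟨y, hy⟩).exists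
      exact ⟨m, Or.inl hm⟩
    · exact ⟨0, Or.inr hy⟩

end StieltjesMeasure

theorem integrableOn_Icc_of_abs_le {S : Set ℝ} {g : ℝ → ℝ}
    (hg : AEStronglyMeasurable g (volume.restrict S)) {z x C : ℝ} (hzx : Icc z x ⊆ S)
    (hC : ∀ s ∈ Icc z x, |g s| ≤ C) : IntegrableOn g (Icc z x) :=
  IntegrableOn.of_bound measure_Icc_lt_top
    (hg.mono_measure (Measure.restrict_mono hzx le_rfl)) C
    (ae_restrict_of_forall_mem measurableSet_Icc hC)

namespace IsGauge

variable {I : Set ℝ} {w : ℕ → ℝ → ℝ}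

theorem measurable_indicator (hw : IsGauge I w) (hI : MeasurableSet I) (j : ℕ) :
    Measurable (I.indicator (w j)) := by
  refine measurable_of_restrict_of_restrict_compl hI ?_ ?_
  · convert (hw j).2.1 using 1
    funext x
    exact indicator_of_mem x.2 _
  · convert (measurable_const : Measurable fun _ : (Iᶜ : Set ℝ) => (0 : ℝ)) using 1
    funext x
    exact indicator_of_notMem x.2 _

theorem aestronglyMeasurable (hw : IsGauge I w) (hI : MeasurableSet I) (j : ℕ) :
    AEStronglyMeasurable (w j) (volume.restrict I) :=
  (hw.measurable_indicator hI j).aestronglyMeasurable.congr <|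
    ae_restrict_of_forall_mem hI fun _ hx => indicator_of_mem hx _

theorem intervalIntegrable (hw : IsGauge I w) (hI : I.OrdConnected) (j : ℕ) {z x : ℝ}
    (hz : z ∈ I) (hx : x ∈ I) (hzx : z ≤ x) : IntervalIntegrable (w j) volume z x := by
  obtain ⟨C, hC⟩ := (hw j).2.2 (Icc z x) (hI.out hz hx) isCompact_Icc
  exact (intervalIntegrable_iff_integrableOn_Icc_of_le hzx).2 <|
    integrableOn_Icc_of_abs_le (hw.aestronglyMeasurable hI.measurableSet j) (hI.out hz hx) hC

end IsGauge

theorem IsGenL.tendsto_nhdsGT {I : Set ℝ} {w : ℕ → ℝ → ℝ} {n : ℕ} {f : ℝ → ℝ}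
    {d : ℕ → ℝ → ℝ} (hf : IsGenL I w n f d) (hI : I.OrdConnected) {i : ℕ} (hin : i ≤ n)
    {x q : ℝ} (hx : x ∈ I) (hq : q ∈ I) (hxq : x < q) :
    Tendsto (d i) (𝓝[>] x) (𝓝 (d i x)) := by
  have hIoo : ∀ y ∈ Ioo x q, y ∈ I := fun y hy => hI.out hx hq ⟨hy.1.le, hy.2.le⟩
  rcases hin.lt_or_eq with hin | rfl
  · -- for `i < n`, `d i` is a primitive, hence continuous
    have hprim := intervalIntegral.continuousOn_primitive_interval'
      (hf.integrable i hin x hx q hq) left_mem_uIcc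
    have hcont : ContinuousWithinAt (fun y => ∫ u in x..y, d (i + 1) u * w (i + 1) u)
        (Ioi x) x :=
      (hprim x left_mem_uIcc).mono_of_mem_nhdsWithin <| mem_of_superset (Ioo_mem_nhdsGT hxq)
        fun y hy => Icc_subset_uIcc ⟨hy.1.le, hy.2.le⟩
    have := (tendsto_const_nhds (x := d i x)).add hcont.tendsto
    rw [intervalIntegral.integral_same, add_zero] at this
    refine this.congr' (eventually_of_mem (Ioo_mem_nhdsGT hxq) fun y hy => ?_)
    exact (hf.deriv_eq i hin x hx y (hIoo y hy)).symm
  · exact (hf.ld.1 x hx ⟨q, hq, hxq⟩).mono_left <| nhdsWithin_le_of_mem <|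
      mem_of_superset (Ioo_mem_nhdsGT hxq) fun y hy => ⟨hIoo y hy, hy.1⟩

namespace MemF

variable {I : Set ℝ} {w : ℕ → ℝ → ℝ} {k n : ℕ} {f : ℝ → ℝ} {d : ℕ → ℝ → ℝ}

theorem nonneg_of_lt (hf : MemF I w k n f d) (hI : I.OrdConnected) (hw : IsGauge I w)
    (hk : 1 ≤ k) {i : ℕ} (hki : k ≤ i) (hin : i ≤ n) {z x : ℝ} (hz : z ∈ I) (hx : x ∈ I)
    (hzx : z < x) : 0 ≤ d i x := by
  obtain ⟨i, rfl⟩ : ∃ i', i = i' + 1 := ⟨i - 1, by omega⟩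
  have hIcc : Icc z x ⊆ I := hI.out hz hx
  have hwint := hw.intervalIntegrable hI (i + 1) hz hx hzx.le
  have hW : 0 < ∫ u in z..x, w (i + 1) u :=
    intervalIntegral.intervalIntegral_pos_of_pos_on hwint
      (fun u hu => (hw (i + 1)).1 u (hIcc (Ioo_subset_Icc_self hu))) hzx
  refine nonneg_of_mul_nonneg_left ?_ hW
  calc 0 ≤ d i x - d i z := sub_nonneg.2 (hf.2 i (by omega) (by omega) hz hx hzx.le)
    _ = ∫ u in z..x, d (i + 1) u * w (i + 1) u := by
        rw [hf.1.deriv_eq i (by omega) z hz x hx]; ring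
    _ ≤ ∫ u in z..x, d (i + 1) x * w (i + 1) u :=
        intervalIntegral.integral_mono_on hzx.le (hf.1.integrable i (by omega) z hz x hx)
          (hwint.const_mul _) fun u hu => mul_le_mul_of_nonneg_right
            (hf.2 (i + 1) (by omega) hin (hIcc hu) hx hu.2) ((hw (i + 1)).1 u (hIcc hu)).le
    _ = d (i + 1) x * ∫ u in z..x, w (i + 1) u := intervalIntegral.integral_const_mul _ _

theorem nonneg (hf : MemF I w k n f d) (hI : I.OrdConnected)
    (hIne : ∃ p ∈ I, ∃ q ∈ I, p < q) (hw : IsGauge I w) (hk : 1 ≤ k) {i : ℕ} (hki : k ≤ i)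
    (hin : i ≤ n) {x : ℝ} (hx : x ∈ I) : 0 ≤ d i x := by
  by_cases hmin : ∃ z ∈ I, z < x
  · obtain ⟨z, hz, hzx⟩ := hmin
    exact hf.nonneg_of_lt hI hw hk hki hin hz hx hzx
  -- `x` is the least point of `I`: pass to the limit from the right
  obtain ⟨p, hp, q, hq, hpq⟩ := hIne
  have hxq : x < q := (not_lt.1 fun h => hmin ⟨p, hp, h⟩).trans_lt hpq
  refine ge_of_tendsto (hf.1.tendsto_nhdsGT hI hin hx hq hxq) ?_
  filter_upwards [Ioo_mem_nhdsGT hxq] with y hy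
  exact hf.nonneg_of_lt hI hw hk hki hin hx (hI.out hx hq ⟨hy.1.le, hy.2.le⟩) hy.1

theorem bddBelow (hf : MemF I w k n f d) (hI : I.OrdConnected)
    (hIne : ∃ p ∈ I, ∃ q ∈ I, p < q) (hw : IsGauge I w) (hk : 1 ≤ k) {i : ℕ} (hki : k ≤ i)
    (hin : i ≤ n) : BddBelow (d i '' I) :=
  ⟨0, by rintro _ ⟨y, hy, rfl⟩; exact hf.nonneg hI hIne hw hk hki hin hy⟩

theorem lintegral_Ioc (hf : MemF I w k n f d) (hI : I.OrdConnected) (hw : IsGauge I w)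
    (hk : 1 ≤ k) {j : ℕ} (hkj : k ≤ j + 1) (hjn : j < n) {z x : ℝ} (hz : z ∈ I) (hx : x ∈ I)
    (hzx : z ≤ x) :
    ∫⁻ u in Ioc z x, ENNReal.ofReal (d (j + 1) u * w (j + 1) u)
      = ENNReal.ofReal (d j x - d j z) := by
  have hnn : 0 ≤ᵐ[volume.restrict (Ioc z x)] fun u => d (j + 1) u * w (j + 1) u := by
    refine ae_restrict_of_forall_mem measurableSet_Ioc fun u hu => ?_
    have hu' : u ∈ I := hI.out hz hx ⟨hu.1.le, hu.2⟩
    exact mul_nonneg (hf.nonneg_of_lt hI hw hk hkj (by omega) hz hu' hu.1)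
      ((hw (j + 1)).1 u hu').le
  rw [← ofReal_integral_eq_lintegral_ofReal
    ((intervalIntegrable_iff_integrableOn_Ioc_of_le hzx).1
      (hf.1.integrable j hjn z hz x hx)) hnn, ← intervalIntegral.integral_of_le hzx,
    hf.1.deriv_eq j hjn z hz x hx, add_sub_cancel_left]

theorem lintegral_inter_Iio (hf : MemF I w k n f d) (hI : I.OrdConnected)
    (hIne : ∃ p ∈ I, ∃ q ∈ I, p < q) (hw : IsGauge I w) (hk : 1 ≤ k) {j : ℕ} (hkj : k ≤ j)
    (hjn : j < n) {x : ℝ} (hx : x ∈ I) :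
    ∫⁻ u in I ∩ Iio x, ENNReal.ofReal (d (j + 1) u * w (j + 1) u)
      = ENNReal.ofReal (d j x - ⨅ z : I, d j z) := by
  set g : ℝ → ℝ≥0∞ := fun u => ENNReal.ofReal (d (j + 1) u * w (j + 1) u)
  calc ∫⁻ u in I ∩ Iio x, g u = ∫⁻ u in I ∩ Iic x, g u :=
        setLIntegral_congr (ae_eq_refl I |>.inter Iio_ae_eq_Iic)
    _ = volume.withDensity g (I ∩ Iic x) :=
        (withDensity_apply _ (hI.measurableSet.inter measurableSet_Iic)).symm
    _ = ENNReal.ofReal (d j x - ⨅ z : I, d j z) :=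
        measure_inter_Iic_eq_ofReal_sub_iInf hI (hf.2 j (by omega) hjn.le)
          (hf.bddBelow hI hIne hw hk hkj hjn.le)
          (fun z hz y hy hzy => by
            rw [withDensity_apply _ measurableSet_Ioc]
            exact hf.lintegral_Ioc hI hw hk (by omega) hjn hz hy hzy)
          (fun y _ _ => withDensity_absolutelyContinuous _ _ (measure_singleton y)) hx

theorem measure_inter_Iic (hf : MemF I w k n f d) (hI : I.OrdConnected)
    (hIne : ∃ p ∈ I, ∃ q ∈ I, p < q) (hw : IsGauge I w) (hk : 1 ≤ k) (hkn : k ≤ n)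
    {μ : Measure ℝ}
    (hμIoc : ∀ x ∈ I, ∀ y ∈ I, x ≤ y → μ (Set.Ioc x y) = ENNReal.ofReal (d n y - d n x))
    (hμa : ∀ x ∈ I, (∀ y ∈ I, x ≤ y) → μ {x} = 0) {x : ℝ} (hx : x ∈ I) :
    μ (I ∩ Iic x) = ENNReal.ofReal (d n x - ⨅ z : I, d n z) :=
  measure_inter_Iic_eq_ofReal_sub_iInf hI (hf.2 n (by omega) le_rfl)
    (hf.bddBelow hI hIne hw hk hkn le_rfl) hμIoc hμa hx

end MemF

theorem measurable_setIntegral_Ioc_fst {G : ℝ × ℝ → ℝ} (hG : Measurable G)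
    {A B : ℝ × ℝ → ℝ} (hA : Measurable A) (hB : Measurable B) :
    Measurable fun p : ℝ × ℝ => ∫ s in Ioc (A p) (B p), G (p.1, s) := by
  have hset : MeasurableSet {q : (ℝ × ℝ) × ℝ | q.2 ∈ Ioc (A q.1) (B q.1)} :=
    (measurableSet_lt (hA.comp measurable_fst) measurable_snd).inter
      (measurableSet_le measurable_snd (hB.comp measurable_fst))
  have := ((hG.comp (measurable_fst.fst.prodMk measurable_snd)).indicator
    hset).stronglyMeasurable.integral_prod_right' (ν := volume)
  convert this.measurable using 2 with p
  rw [← integral_indicator measurableSet_Ioc]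
  rfl

theorem measurable_intervalIntegral_fst_snd {G : ℝ × ℝ → ℝ} (hG : Measurable G) :
    Measurable fun p : ℝ × ℝ => ∫ s in p.1..p.2, G (p.1, s) :=
  (measurable_setIntegral_Ioc_fst hG measurable_fst measurable_snd).sub
    (measurable_setIntegral_Ioc_fst hG measurable_snd measurable_fst)

theorem pfun_self (w : ℕ → ℝ → ℝ) (t : ℝ) (j : ℕ) : pfun w t j j = w j := by
  simp [pfun, pAux]

theorem pfun_succ (w : ℕ → ℝ → ℝ) (t : ℝ) {j n : ℕ} (hjn : j < n) (x : ℝ) :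
    pfun w t j n x = w j x * ∫ u in t..x, pfun w t (j + 1) n u := by
  rw [pfun, show n - j = n - (j + 1) + 1 by omega, pAux, show n - (n - (j + 1) + 1) = j by omega]
  rfl

theorem pE_self (w : ℕ → ℝ → ℝ) (I : Set ℝ) (j : ℕ) (x : ℝ) :
    pE w I j j x = ENNReal.ofReal (w j x) := by
  simp [pE, pAuxE]

theorem pE_succ (w : ℕ → ℝ → ℝ) (I : Set ℝ) {j n : ℕ} (hjn : j < n) (x : ℝ) :
    pE w I j n x = ENNReal.ofReal (w j x) * ∫⁻ u in I ∩ Iio x, pE w I (j + 1) n u := by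
  rw [pE, show n - j = n - (j + 1) + 1 by omega, pAuxE, show n - (n - (j + 1) + 1) = j by omega]
  rfl

section WPolynomials

variable {I : Set ℝ} {w : ℕ → ℝ → ℝ}

theorem pAux_congr {w' : ℕ → ℝ → ℝ} (hI : I.OrdConnected) (hww' : ∀ j, EqOn (w j) (w' j) I)
    {t : ℝ} (ht : t ∈ I) (m : ℕ) : ∀ i, EqOn (pAux w t m i) (pAux w' t m i) I
  | 0 => hww' m
  | i + 1 => fun x hx => by
    simp only [pAux]
    rw [hww' _ hx, intervalIntegral.integral_congr fun u hu =>
      pAux_congr hI hww' ht m i (hI.uIcc_subset ht hx hu)]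

theorem pAux_nonneg (hw : IsGauge I w) (hI : I.OrdConnected) (m : ℕ) {t : ℝ} (ht : t ∈ I) :
    ∀ i, ∀ x ∈ I, t ≤ x → 0 ≤ pAux w t m i x
  | 0 => fun x hx _ => ((hw m).1 x hx).le
  | i + 1 => fun x hx htx => mul_nonneg ((hw _).1 x hx).le <|
    intervalIntegral.integral_nonneg htx fun u hu =>
      pAux_nonneg hw hI m ht i u (hI.out ht hx hu) hu.1

theorem measurable_pAux_uncurry (hw : ∀ j, Measurable (w j)) (m : ℕ) :
    ∀ i, Measurable fun p : ℝ × ℝ => pAux w p.1 m i p.2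
  | 0 => (hw m).comp measurable_snd
  | i + 1 => ((hw _).comp measurable_snd).mul <|
    measurable_intervalIntegral_fst_snd (G := fun p => pAux w p.1 m i p.2)
      (measurable_pAux_uncurry hw m i)

namespace IsGauge

-- `w j` is only measurable on `I`, but `pAux` of its extension by zero is jointly measurable
-- and agrees with `pAux w` on `I`.
theorem aestronglyMeasurable_pAux (hw : IsGauge I w) (hI : I.OrdConnected) (m i : ℕ)
    {t : ℝ} (ht : t ∈ I) : AEStronglyMeasurable (pAux w t m i) (volume.restrict I) :=
  ((measurable_pAux_uncurry (hw.measurable_indicator hI.measurableSet) m i).comp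
    measurable_prodMk_left).aestronglyMeasurable.congr <|
    ae_restrict_of_forall_mem hI.measurableSet fun _ hx =>
      (pAux_congr hI (fun _ => eqOn_indicator.symm) ht m i hx).symm

theorem exists_abs_pAux_le (hw : IsGauge I w) (hI : I.OrdConnected) (m : ℕ) {t x : ℝ}
    (ht : t ∈ I) (hx : x ∈ I) (htx : t ≤ x) :
    ∀ i, ∃ C, ∀ s ∈ Icc t x, |pAux w t m i s| ≤ C
  | 0 => (hw m).2.2 _ (hI.out ht hx) isCompact_Icc
  | i + 1 => by
    obtain ⟨C, hC⟩ := exists_abs_pAux_le hw hI m ht hx htx i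
    obtain ⟨Cw, hCw⟩ := (hw (m - (i + 1))).2.2 _ (hI.out ht hx) isCompact_Icc
    have hC0 : 0 ≤ C := (abs_nonneg _).trans (hC t ⟨le_rfl, htx⟩)
    refine ⟨Cw * (C * (x - t)), fun s hs => ?_⟩
    have hint : |∫ u in t..s, pAux w t m i u| ≤ C * (x - t) := by
      calc |∫ u in t..s, pAux w t m i u| ≤ C * |s - t| :=
            intervalIntegral.norm_integral_le_of_norm_le_const (f := pAux w t m i) fun u hu =>
              have hu : u ∈ Ioc t s := uIoc_of_le hs.1 ▸ hu
              hC u ⟨hu.1.le, hu.2.trans hs.2⟩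
        _ ≤ C * (x - t) := by
            rw [abs_of_nonneg (sub_nonneg.2 hs.1)]
            exact mul_le_mul_of_nonneg_left (by linarith [hs.2]) hC0
    simp only [pAux, abs_mul]
    exact mul_le_mul (hCw s hs) hint (abs_nonneg _) ((abs_nonneg _).trans (hCw s hs))

theorem intervalIntegrable_pfun (hw : IsGauge I w) (hI : I.OrdConnected) (j n : ℕ)
    {t x : ℝ} (ht : t ∈ I) (hx : x ∈ I) (htx : t ≤ x) :
    IntervalIntegrable (pfun w t j n) volume t x := by
  obtain ⟨C, hC⟩ := hw.exists_abs_pAux_le hI n ht hx htx (n - j)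
  exact (intervalIntegrable_iff_integrableOn_Icc_of_le htx).2 <|
    integrableOn_Icc_of_abs_le (hw.aestronglyMeasurable_pAux hI n _ ht) (hI.out ht hx) hC

theorem aemeasurable_pAuxE (hw : IsGauge I w) (hI : MeasurableSet I) (m : ℕ) :
    ∀ i, AEMeasurable (pAuxE w I m i) (volume.restrict I)
  | 0 => (hw.aestronglyMeasurable hI m).aemeasurable.ennreal_ofReal
  | _ + 1 => (hw.aestronglyMeasurable hI _).aemeasurable.ennreal_ofReal.mul <|
    (Monotone.measurable fun _ _ hab =>
      lintegral_mono_set (inter_subset_inter_right I (Iio_subset_Iio hab))).aemeasurable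

theorem aemeasurable_pplus_uncurry (hw : IsGauge I w) (hI : I.OrdConnected) {A : Set ℝ}
    (hA : MeasurableSet A) (hAI : A ⊆ I) {ν : Measure ℝ} [SFinite (ν.restrict I)] (j m : ℕ) :
    AEMeasurable (Function.uncurry fun u t => ENNReal.ofReal (pplus w t j m u))
      ((volume.restrict A).prod (ν.restrict I)) := by
  have hmeas : Measurable fun p : ℝ × ℝ =>
      ENNReal.ofReal (pplus (fun j => I.indicator (w j)) p.2 j m p.1) :=
    ENNReal.measurable_ofReal.comp <| Measurable.ite (measurableSet_le measurable_snd measurable_fst)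
      ((measurable_pAux_uncurry (hw.measurable_indicator hI.measurableSet) m (m - j)).comp
        measurable_swap) measurable_const
  have hmem : ∀ᵐ p ∂(volume.restrict A).prod (ν.restrict I), p ∈ A ×ˢ I := by
    refine (Measure.ae_prod_mem_iff_ae_ae_mem (hA.prod hI.measurableSet)).2 ?_
    filter_upwards [ae_restrict_mem hA] with u hu
    filter_upwards [ae_restrict_mem hI.measurableSet] with t ht
    exact ⟨hu, ht⟩
  refine hmeas.aemeasurable.congr ?_
  filter_upwards [hmem] with p hp
  simp only [Function.uncurry, pplus, pfun]
  split_ifs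
  · rw [pAux_congr hI (fun _ => eqOn_indicator) hp.2 m (m - j) (hAI hp.1)]
  · rfl

end IsGauge

end WPolynomials

theorem lintegral_pplus_self (w : ℕ → ℝ → ℝ) (I : Set ℝ) (n : ℕ) (x : ℝ) (μ : Measure ℝ) :
    ∫⁻ t in I, ENNReal.ofReal (pplus w t n n x) ∂μ = ENNReal.ofReal (w n x) * μ (I ∩ Iic x) := by
  have h : ∀ t, ENNReal.ofReal (pplus w t n n x)
      = (Iic x).indicator (fun _ => ENNReal.ofReal (w n x)) t := fun t => by
    by_cases htx : t ≤ x <;> simp [pplus, pfun_self, htx]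
  simp_rw [h]
  rw [lintegral_indicator measurableSet_Iic, Measure.restrict_restrict measurableSet_Iic,
    setLIntegral_const, inter_comm]

section TaylorExpansion

variable {I : Set ℝ} {w : ℕ → ℝ → ℝ}

namespace IsGauge

theorem ofReal_mul_lintegral_pplus (hw : IsGauge I w) (hI : I.OrdConnected) {j n : ℕ}
    (hjn : j < n) {t x : ℝ} (ht : t ∈ I) (hx : x ∈ I) :
    ENNReal.ofReal (w j x) * ∫⁻ u in I ∩ Iio x, ENNReal.ofReal (pplus w t (j + 1) n u)
      = ENNReal.ofReal (pplus w t j n x) := by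
  have hA : MeasurableSet (I ∩ Iio x) := hI.measurableSet.inter measurableSet_Iio
  rcases lt_or_ge x t with hxt | htx
  · rw [setLIntegral_congr_fun (g := fun _ => 0) hA fun u hu => by
        simp [pplus, not_le.2 (hu.2.trans hxt)], lintegral_zero, mul_zero]
    simp [pplus, not_le.2 hxt]
  have hpplus : ∀ u ∈ I ∩ Iio x, ENNReal.ofReal (pplus w t (j + 1) n u)
      = (Ico t x).indicator (fun u => ENNReal.ofReal (pfun w t (j + 1) n u)) u := by
    intro u hu
    by_cases htu : t ≤ u
    · simp [pplus, htu, indicator_of_mem (show u ∈ Ico t x from ⟨htu, hu.2⟩)]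
    · simp [pplus, htu]
  have hIco : Ico t x ⊆ I ∩ Iio x := fun u hu => ⟨hI.out ht hx ⟨hu.1, hu.2.le⟩, hu.2⟩
  have hnn : 0 ≤ᵐ[volume.restrict (Ioc t x)] pfun w t (j + 1) n :=
    ae_restrict_of_forall_mem measurableSet_Ioc fun u hu =>
      pAux_nonneg hw hI n ht _ u (hI.out ht hx ⟨hu.1.le, hu.2⟩) hu.1.le
  rw [setLIntegral_congr_fun hA hpplus, lintegral_indicator measurableSet_Ico,
    Measure.restrict_restrict measurableSet_Ico, inter_eq_left.2 hIco,
    setLIntegral_congr Ico_ae_eq_Ioc, ← ofReal_integral_eq_lintegral_ofReal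
      ((intervalIntegrable_iff_integrableOn_Ioc_of_le htx).1
        (hw.intervalIntegrable_pfun hI _ _ ht hx htx)) hnn,
    ← intervalIntegral.integral_of_le htx, ← ENNReal.ofReal_mul ((hw j).1 x hx).le,
    ← pfun_succ w t hjn x]
  simp [pplus, htx]

theorem ofReal_mul_lintegral_lintegral_pplus (hw : IsGauge I w) (hI : I.OrdConnected)
    {j n : ℕ} (hjn : j < n) {x : ℝ} (hx : x ∈ I) {μ : Measure ℝ} [SFinite (μ.restrict I)] :
    ENNReal.ofReal (w j x) * ∫⁻ u in I ∩ Iio x, ∫⁻ t in I, ENNReal.ofReal (pplus w t (j + 1) n u) ∂μ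
      = ∫⁻ t in I, ENNReal.ofReal (pplus w t j n x) ∂μ := by
  rw [lintegral_lintegral_swap (hw.aemeasurable_pplus_uncurry hI
      (hI.measurableSet.inter measurableSet_Iio) inter_subset_left _ _),
    ← lintegral_const_mul' _ _ ENNReal.ofReal_ne_top]
  exact setLIntegral_congr_fun hI.measurableSet fun t ht => hw.ofReal_mul_lintegral_pplus hI hjn ht hx

end IsGauge

namespace MemF

variable {k n : ℕ} {f : ℝ → ℝ} {d : ℕ → ℝ → ℝ} {μ : Measure ℝ}

theorem iInf_nonneg (hf : MemF I w k n f d) (hI : I.OrdConnected)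
    (hIne : ∃ p ∈ I, ∃ q ∈ I, p < q) (hw : IsGauge I w) (hk : 1 ≤ k) {i : ℕ} (hki : k ≤ i)
    (hin : i ≤ n) : 0 ≤ ⨅ z : I, d i z := by
  have : Nonempty I := let ⟨p, hp, _⟩ := hIne; ⟨⟨p, hp⟩⟩
  exact le_ciInf fun z => hf.nonneg hI hIne hw hk hki hin z.2

theorem iInf_le (hf : MemF I w k n f d) (hI : I.OrdConnected)
    (hIne : ∃ p ∈ I, ∃ q ∈ I, p < q) (hw : IsGauge I w) (hk : 1 ≤ k) {i : ℕ} (hki : k ≤ i)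
    (hin : i ≤ n) {x : ℝ} (hx : x ∈ I) : ⨅ z : I, d i z ≤ d i x :=
  ciInf_le (image_eq_range (d i) I ▸ hf.bddBelow hI hIne hw hk hki hin) (⟨x, hx⟩ : I)

theorem taylor_step (hf : MemF I w k n f d) (hI : I.OrdConnected)
    (hIne : ∃ p ∈ I, ∃ q ∈ I, p < q) (hw : IsGauge I w) (hk : 1 ≤ k) [SFinite (μ.restrict I)]
    {j : ℕ} (hkj : k ≤ j) (hjn : j < n)
    (ih : ∀ u ∈ I, ENNReal.ofReal (d (j + 1) u * w (j + 1) u)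
      = (∑ i ∈ Finset.Icc (j + 1) n, ENNReal.ofReal (⨅ z : I, d i z) * pE w I (j + 1) i u)
        + ∫⁻ t in I, ENNReal.ofReal (pplus w t (j + 1) n u) ∂μ)
    {x : ℝ} (hx : x ∈ I) :
    ENNReal.ofReal (d j x * w j x)
      = (∑ i ∈ Finset.Icc j n, ENNReal.ofReal (⨅ z : I, d i z) * pE w I j i x)
        + ∫⁻ t in I, ENNReal.ofReal (pplus w t j n x) ∂μ := by
  set L : ℕ → ℝ := fun i => ⨅ z : I, d i z
  set c := ENNReal.ofReal (w j x)
  have hA : MeasurableSet (I ∩ Iio x) := hI.measurableSet.inter measurableSet_Iio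
  have hS : ∀ i ∈ Finset.Icc (j + 1) n, AEMeasurable
      (fun u => ENNReal.ofReal (L i) * pE w I (j + 1) i u) (volume.restrict (I ∩ Iio x)) :=
    fun i _ => ((hw.aemeasurable_pAuxE hI.measurableSet i (i - (j + 1))).mono_measure
      (Measure.restrict_mono inter_subset_left le_rfl)).const_mul _
  calc ENNReal.ofReal (d j x * w j x)
      = c * (ENNReal.ofReal (L j)
          + ∫⁻ u in I ∩ Iio x, ENNReal.ofReal (d (j + 1) u * w (j + 1) u)) := by
        rw [hf.lintegral_inter_Iio hI hIne hw hk hkj hjn hx,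
          ← ENNReal.ofReal_add (hf.iInf_nonneg hI hIne hw hk hkj hjn.le) (sub_nonneg.2 (hf.iInf_le hI hIne hw hk hkj hjn.le hx)),
          add_sub_cancel, mul_comm, ENNReal.ofReal_mul ((hw j).1 x hx).le]
    _ = c * ENNReal.ofReal (L j)
          + (c * ∫⁻ u in I ∩ Iio x, ∑ i ∈ Finset.Icc (j + 1) n,
              ENNReal.ofReal (L i) * pE w I (j + 1) i u)
          + c * ∫⁻ u in I ∩ Iio x, ∫⁻ t in I, ENNReal.ofReal (pplus w t (j + 1) n u) ∂μ := by
        rw [setLIntegral_congr_fun hA fun u hu => ih u hu.1,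
          lintegral_add_left' (Finset.aemeasurable_fun_sum _ hS), mul_add, mul_add, add_assoc]
    _ = ENNReal.ofReal (L j) * pE w I j j x
          + (∑ i ∈ Finset.Ioc j n, ENNReal.ofReal (L i) * pE w I j i x)
          + ∫⁻ t in I, ENNReal.ofReal (pplus w t j n x) ∂μ := by
        rw [hw.ofReal_mul_lintegral_lintegral_pplus hI hjn hx, lintegral_finsetSum' _ hS,
          Finset.mul_sum, pE_self, mul_comm, ← Finset.Icc_add_one_left_eq_Ioc]
        congr 2
        refine Finset.sum_congr rfl fun i hi => ?_
        rw [lintegral_const_mul' _ _ ENNReal.ofReal_ne_top,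
          pE_succ w I (by have := (Finset.mem_Icc.1 hi).1; omega) x]
        ring
    _ = _ := by
        rw [Finset.add_sum_Ioc_eq_sum_Icc (f := fun i => ENNReal.ofReal (L i) * pE w I j i x)
          hjn.le]

theorem taylor (hf : MemF I w k n f d) (hI : I.OrdConnected)
    (hIne : ∃ p ∈ I, ∃ q ∈ I, p < q) (hw : IsGauge I w) (hk : 1 ≤ k)
    (hμIoc : ∀ x ∈ I, ∀ y ∈ I, x ≤ y → μ (Set.Ioc x y) = ENNReal.ofReal (d n y - d n x))
    (hμa : ∀ x ∈ I, (∀ y ∈ I, x ≤ y) → μ {x} = 0) {j : ℕ} (hkj : k ≤ j) (hjn : j ≤ n)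
    {x : ℝ} (hx : x ∈ I) :
    ENNReal.ofReal (d j x * w j x)
      = (∑ i ∈ Finset.Icc j n, ENNReal.ofReal (⨅ z : I, d i z) * pE w I j i x)
        + ∫⁻ t in I, ENNReal.ofReal (pplus w t j n x) ∂μ := by
  have hkn : k ≤ n := hkj.trans hjn
  have hμI : ∀ x ∈ I, μ (I ∩ Iic x) = ENNReal.ofReal (d n x - ⨅ z : I, d n z) :=
    fun x hx => hf.measure_inter_Iic hI hIne hw hk hkn hμIoc hμa hx
  have : SigmaFinite (μ.restrict I) :=
    sigmaFinite_restrict_of_measure_inter_Iic_ne_top hI ⟨x, hx⟩ fun x hx =>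
      (hμI x hx).trans_ne ENNReal.ofReal_ne_top
  induction hjn using Nat.decreasingInduction generalizing x with
  | self =>
    have hL := hf.iInf_nonneg hI hIne hw hk hkn le_rfl
    have hw0 := ((hw n).1 x hx).le
    rw [Finset.Icc_self, Finset.sum_singleton, pE_self, lintegral_pplus_self, hμI x hx,
      ← ENNReal.ofReal_mul hL, ← ENNReal.ofReal_mul hw0, ← ENNReal.ofReal_add (mul_nonneg hL hw0)
        (mul_nonneg hw0 (sub_nonneg.2 (hf.iInf_le hI hIne hw hk hkn le_rfl hx)))]
    ring_nf
  | of_succ j hjn ih =>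
    exact hf.taylor_step hI hIne hw hk hkj hjn (fun u hu => ih (by omega) hu) hx

theorem iInf_eq_zero_of_pE_eq_top (hf : MemF I w k n f d) (hI : I.OrdConnected)
    (hIne : ∃ p ∈ I, ∃ q ∈ I, p < q) (hw : IsGauge I w) (hk : 1 ≤ k)
    (hμIoc : ∀ x ∈ I, ∀ y ∈ I, x ≤ y → μ (Set.Ioc x y) = ENNReal.ofReal (d n y - d n x))
    (hμa : ∀ x ∈ I, (∀ y ∈ I, x ≤ y) → μ {x} = 0) {j i : ℕ} (hkj : k ≤ j) (hji : j ≤ i)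
    (hin : i ≤ n) (htop : ∀ x ∈ I, pE w I j i x = ⊤) : ⨅ z : I, d i z = 0 := by
  obtain ⟨x, hx, -⟩ := id hIne
  -- `L i * p_{a;j,i}(x)` is a summand of the finite expansion at `x`
  have hfin : ENNReal.ofReal (⨅ z : I, d i z) * pE w I j i x ≠ ⊤ := by
    refine ne_top_of_le_ne_top (ENNReal.ofReal_ne_top (r := d j x * w j x)) ?_
    rw [hf.taylor hI hIne hw hk hμIoc hμa (μ := μ) hkj (hji.trans hin) hx]
    exact (Finset.single_le_sum (f := fun i => ENNReal.ofReal (⨅ z : I, d i z) * pE w I j i x)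
      (fun _ _ => zero_le) (Finset.mem_Icc.2 ⟨hji, hin⟩)).trans le_self_add
  rw [htop x hx] at hfin
  refine le_antisymm (ENNReal.ofReal_eq_zero.1 ?_) (hf.iInf_nonneg hI hIne hw hk (hkj.trans hji) hin)
  by_contra h
  exact hfin (ENNReal.mul_top h)

end MemF

end TaylorExpansion

theorem stmt_10_general (I : Set ℝ) (hI : I.OrdConnected) (hIne : ∃ p ∈ I, ∃ q ∈ I, p < q)
    (w : ℕ → ℝ → ℝ) (hw : IsGauge I w)
    (k n : ℕ) (hk : 1 ≤ k)
    (f : ℝ → ℝ) (d : ℕ → ℝ → ℝ) (hf : MemF I w k n f d)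
    (μ : Measure ℝ)
    (hμIoc : ∀ x ∈ I, ∀ y ∈ I, x ≤ y → μ (Set.Ioc x y) = ENNReal.ofReal (d n y - d n x))
    (hμa : ∀ x ∈ I, (∀ y ∈ I, x ≤ y) → μ {x} = 0) :
    ∃ L : ℕ → ℝ,
      (∀ i, k ≤ i → i ≤ n →
        0 ≤ L i ∧ Tendsto (d i) (leftEndFilter I) (nhds (L i))) ∧
      (∀ j i, k ≤ j → j ≤ i → i ≤ n → (∀ x ∈ I, pE w I j i x = ⊤) → L i = 0) ∧
      (∀ j, k ≤ j → j ≤ n → ∀ x ∈ I,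
        ENNReal.ofReal (d j x * w j x)
          = (∑ i ∈ Finset.Icc j n, ENNReal.ofReal (L i) * pE w I j i x)
            + ∫⁻ t in I, ENNReal.ofReal (pplus w t j n x) ∂μ) := by
  refine ⟨fun i => ⨅ z : I, d i z, fun i hki hin => ⟨hf.iInf_nonneg hI hIne hw hk hki hin, ?_⟩,
    fun j i hkj hji hin htop =>
      hf.iInf_eq_zero_of_pE_eq_top hI hIne hw hk hμIoc hμa hkj hji hin htop,
    fun j hkj hjn x hx => hf.taylor hI hIne hw hk hμIoc hμa hkj hjn hx⟩
  obtain ⟨x, hx, -⟩ := id hIne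
  rw [leftEndFilter_eq_map_atBot ⟨x, hx⟩, tendsto_map'_iff]
  exact tendsto_atBot_ciInf (fun a b hab => hf.2 i (by omega) hin a.2 b.2 hab)
    (image_eq_range (d i) I ▸ hf.bddBelow hI hIne hw hk hki hin)

/-- Lemma `taylor-k`: the generalized Taylor expansion at the left
endpoint `a` of `I` of the generalized derivatives `f^{(j)}`, `j ∈ {k, …, n}`, of
`f ∈ F_+^{k:n}(I)`; here `L i = f^{(i)}(a+)` and `μ` is the Lebesgue–Stieltjes measure of
`f^{(n)} = d n` on `I`. -/
theorem stmt_10 (I : Set ℝ) (hI : I.OrdConnected) (hIne : ∃ p ∈ I, ∃ q ∈ I, p < q)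
    (w : ℕ → ℝ → ℝ) (hw : IsGauge I w)
    (k n : ℕ) (hk : 1 ≤ k) (hkn : k ≤ n)
    (f : ℝ → ℝ) (d : ℕ → ℝ → ℝ) (hf : MemF I w k n f d)
    (μ : Measure ℝ)
    (hμIoc : ∀ x ∈ I, ∀ y ∈ I, x ≤ y → μ (Set.Ioc x y) = ENNReal.ofReal (d n y - d n x))
    (hμa : ∀ x ∈ I, (∀ y ∈ I, x ≤ y) → μ {x} = 0) :
    ∃ L : ℕ → ℝ,
      (∀ i, k ≤ i → i ≤ n →
        0 ≤ L i ∧ Tendsto (d i) (leftEndFilter I) (nhds (L i))) ∧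
      (∀ j i, k ≤ j → j ≤ i → i ≤ n → (∀ x ∈ I, pE w I j i x = ⊤) → L i = 0) ∧
      (∀ j, k ≤ j → j ≤ n → ∀ x ∈ I,
        ENNReal.ofReal (d j x * w j x)
          = (∑ i ∈ Finset.Icc j n, ENNReal.ofReal (L i) * pE w I j i x)
            + ∫⁻ t in I, ENNReal.ofReal (pplus w t j n x) ∂μ) :=
  stmt_10_general I hI hIne w hw k n hk f d hf μ hμIoc hμa
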